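/- Let Σ be an alphabet. Then RevL(ZMod 2, Σ) equals the Boolean closure of RevL(𝔹,Σ): it is the smallest class of languages over Σ that contains every language recognized by a reversible NFA over Σ and is closed under finite union, finite intersection, and complement (relative to List Σ). -/

import Mathlib

open Matrix

namespace RevWA

/-- A weighted automaton over a semiring `S` and alphabet `α`, given by a linear
representation: number of states `n`, initial weight vector, transition matrices,
and final weight vector. -/
structure WA (S : Type) [Semiring S] (α : Type) where
  n : ℕ
  init : Fin n → S
  trans : α → Matrix (Fin n) (Fin n) S
  final : Fin n → S

variable {S : Type} [Semiring S] {α : Type}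

/-- The matrix associated to a word: product of the transition matrices of its letters. -/
def WA.matWord (A : WA S α) (w : List α) : Matrix (Fin A.n) (Fin A.n) S :=
  (w.map A.trans).prod

/-- The series realized by a weighted automaton: `i ⬝ μ(w) ⬝ f`. -/
def WA.series (A : WA S α) : List α → S :=
  fun w => A.init ⬝ᵥ (A.matWord w).mulVec A.final

/-- A matrix has at most one nonzero entry in each row. -/
def rowOk {n : ℕ} (M : Matrix (Fin n) (Fin n) S) : Prop :=
  ∀ i j j', M i j ≠ 0 → M i j' ≠ 0 → j = j'

/-- A matrix has at most one nonzero entry in each column. -/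
def colOk {n : ℕ} (M : Matrix (Fin n) (Fin n) S) : Prop :=
  ∀ i i' j, M i j ≠ 0 → M i' j ≠ 0 → i = i'

/-- A weighted automaton is reversible if each transition matrix has at most one
nonzero entry in each row and at most one nonzero entry in each column. -/
def WA.Reversible (A : WA S α) : Prop :=
  ∀ a : α, rowOk (A.trans a) ∧ colOk (A.trans a)

/-- A weighted automaton has exactly one initial state. -/
def WA.OneInitial (A : WA S α) : Prop :=
  ∃! q : Fin A.n, A.init q ≠ 0

/-- `Rev S α`: series realized by reversible weighted automata over `S` and `α`. -/
def Rev (S : Type) [Semiring S] (α : Type) : Set (List α → S) :=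
  {r | ∃ A : WA S α, A.Reversible ∧ A.series = r}

/-- `Rev₁ S α`: series realized by reversible weighted automata over `S` and `α`
with exactly one initial state. -/
def Rev1 (S : Type) [Semiring S] (α : Type) : Set (List α → S) :=
  {r | ∃ A : WA S α, A.Reversible ∧ A.OneInitial ∧ A.series = r}

/-- The support of a series. -/
def supp (r : List α → S) : Set (List α) :=
  {w | r w ≠ 0}

/-- `RevL S α`: supports of series realized by reversible weighted automata. -/
def RevL (S : Type) [Semiring S] (α : Type) : Set (Set (List α)) :=
  {L | ∃ r ∈ Rev S α, supp r = L}

/-- `RevL₁ S α`: supports of series realized by reversible weighted automata with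
exactly one initial state. -/
def RevL1 (S : Type) [Semiring S] (α : Type) : Set (Set (List α)) :=
  {L | ∃ r ∈ Rev1 S α, supp r = L}

/-- The characteristic series of a language `L` over `S`. -/
noncomputable def charSeries (S : Type) [Semiring S] {α : Type} (L : Set (List α)) :
    List α → S :=
  L.indicator 1

/-- A reversible nondeterministic finite automaton: deterministic and
codeterministic transition relation. -/
structure RevNFA (α : Type) where
  Q : Type
  fintypeQ : Fintype Q
  δ : Q → α → Q → Prop
  I : Set Q
  F : Set Q
  det : ∀ p a q q', δ p a q → δ p a q' → q = q'
  codet : ∀ p p' a q, δ p a q → δ p' a q → p = p'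

/-- Paths in a reversible NFA. -/
inductive RevNFA.Path {α : Type} (A : RevNFA α) : A.Q → List α → A.Q → Prop
  | nil (q : A.Q) : RevNFA.Path A q [] q
  | cons {p q r : A.Q} {a : α} {w : List α} :
      A.δ p a q → RevNFA.Path A q w r → RevNFA.Path A p (a :: w) r

/-- The language recognized by a reversible NFA. -/
def RevNFA.lang {α : Type} (A : RevNFA α) : Set (List α) :=
  {w | ∃ p ∈ A.I, ∃ q ∈ A.F, A.Path p w q}

/-- A reversible NFA has exactly one initial state. -/
def RevNFA.OneInitial {α : Type} (A : RevNFA α) : Prop :=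
  ∃ q : A.Q, A.I = {q}

/-- `RevL(𝔹,α)`: languages recognized by reversible NFAs. -/
def RevLB (α : Type) : Set (Set (List α)) :=
  {L | ∃ A : RevNFA α, A.lang = L}

/-- `RevL₁(𝔹,α)`: languages recognized by reversible NFAs with exactly one
initial state. -/
def RevL1B (α : Type) : Set (Set (List α)) :=
  {L | ∃ A : RevNFA α, A.OneInitial ∧ A.lang = L}

end RevWA


namespace RevWA

/-- The Boolean closure of a class `C` of languages over `α`: the smallest class
containing `C` and closed under finite union, finite intersection, and complement
relative to `List α`. -/
inductive BoolClosure {α : Type} (C : Set (Set (List α))) : Set (List α) → Prop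
  | base {L : Set (List α)} : L ∈ C → BoolClosure C L
  | empty : BoolClosure C ∅
  | univ : BoolClosure C Set.univ
  | union {L K : Set (List α)} :
      BoolClosure C L → BoolClosure C K → BoolClosure C (L ∪ K)
  | inter {L K : Set (List α)} :
      BoolClosure C L → BoolClosure C K → BoolClosure C (L ∩ K)
  | compl {L : Set (List α)} : BoolClosure C L → BoolClosure C Lᶜ

end RevWA

/-!
Over `ZMod 2` a reversible automaton has weights in `{0, 1}`, and determinism makes entry `(p, q)`
of the matrix of a word `w` equal to `1` exactly when `w` labels a path from `p` to `q`. So its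
series is the sum mod 2 of the characteristic series of the path languages from an initial to a
final state, and its support is an iterated symmetric difference of languages of reversible NFAs.

Conversely, supports of reversible series are closed under intersection (Kronecker product of
automata) and under complement (block sum with the constant series `1`, since `x + 1 ≠ 0 ↔ x = 0`
in `ZMod 2`), and the language of a reversible NFA is the finite union of its path languages, each
the support of a reversible series with one initial and one final state.
-/

open scoped Kronecker

namespace RevWA

variable {S α σ τ : Type}

section Semiring

variable [Semiring S]

-- `WA.Reversible A` unfolds to `∀ a, IsPartialMonomial (A.trans a)`.
def IsPartialMonomial (M : Matrix σ σ S) : Prop :=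
  (∀ i j j', M i j ≠ 0 → M i j' ≠ 0 → j = j') ∧ ∀ i i' j, M i j ≠ 0 → M i' j ≠ 0 → i = i'

theorem IsPartialMonomial.submatrix {M : Matrix σ σ S} (hM : IsPartialMonomial M) {e : τ → σ}
    (he : e.Injective) : IsPartialMonomial (M.submatrix e e) :=
  ⟨fun _ _ _ h h' => he (hM.1 _ _ _ h h'), fun _ _ _ h h' => he (hM.2 _ _ _ h h')⟩

theorem IsPartialMonomial.fromBlocks_zero {M : Matrix σ σ S} {N : Matrix τ τ S}
    (hM : IsPartialMonomial M) (hN : IsPartialMonomial N) :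
    IsPartialMonomial (fromBlocks M 0 0 N) := by
  constructor
  · rintro (i | i) (j | j) (j' | j') h h' <;> simp at h h' ⊢ <;>
      first | exact hM.1 _ _ _ h h' | exact hN.1 _ _ _ h h'
  · rintro (i | i) (i' | i') (j | j) h h' <;> simp at h h' ⊢ <;>
      first | exact hM.2 _ _ _ h h' | exact hN.2 _ _ _ h h'

theorem IsPartialMonomial.one [DecidableEq σ] [Subsingleton σ] :
    IsPartialMonomial (1 : Matrix σ σ S) :=
  ⟨fun _ _ _ _ _ => Subsingleton.elim _ _, fun _ _ _ _ _ => Subsingleton.elim _ _⟩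

theorem IsPartialMonomial.kronecker {M : Matrix σ σ S} {N : Matrix τ τ S}
    (hM : IsPartialMonomial M) (hN : IsPartialMonomial N) : IsPartialMonomial (M ⊗ₖ N) :=
  ⟨fun _ _ _ h h' => Prod.ext
      (hM.1 _ _ _ (left_ne_zero_of_mul h) (left_ne_zero_of_mul h'))
      (hN.1 _ _ _ (right_ne_zero_of_mul h) (right_ne_zero_of_mul h')),
    fun _ _ _ h h' => Prod.ext
      (hM.2 _ _ _ (left_ne_zero_of_mul h) (left_ne_zero_of_mul h'))
      (hN.2 _ _ _ (right_ne_zero_of_mul h) (right_ne_zero_of_mul h'))⟩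

def reprSeries [Fintype σ] [DecidableEq σ] (i : σ → S) (M : α → Matrix σ σ S) (f : σ → S) :
    List α → S :=
  fun w => i ⬝ᵥ (w.map M).prod *ᵥ f

theorem reprSeries_mem_Rev [Fintype σ] [DecidableEq σ] (i f : σ → S) (M : α → Matrix σ σ S)
    (hM : ∀ a, IsPartialMonomial (M a)) : reprSeries i M f ∈ Rev S α := by
  set e := Fintype.equivFin σ
  refine ⟨⟨_, i ∘ e.symm, fun a => reindexAlgEquiv ℕ S e (M a), f ∘ e.symm⟩,
    fun a => (hM a).submatrix e.symm.injective, funext fun w => ?_⟩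
  have hprod : (w.map fun a => reindexAlgEquiv ℕ S e (M a)).prod =
      reindexAlgEquiv ℕ S e (w.map M).prod := by
    rw [map_list_prod, List.map_map]
    rfl
  change (i ∘ e.symm) ⬝ᵥ (w.map fun a => reindexAlgEquiv ℕ S e (M a)).prod *ᵥ (f ∘ e.symm) = _
  rw [hprod, coe_reindexAlgEquiv, reindex_apply, submatrix_mulVec_equiv, Equiv.symm_symm,
    dotProduct_comp_equiv_symm]
  simp only [Function.comp_assoc, Equiv.symm_comp_self, Function.comp_id]
  rfl

theorem WA.series_eq_reprSeries (A : WA S α) : A.series = reprSeries A.init A.trans A.final :=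
  rfl

theorem prod_map_fromBlocks_zero [Fintype σ] [DecidableEq σ] [Fintype τ] [DecidableEq τ]
    (M : α → Matrix σ σ S) (N : α → Matrix τ τ S) (w : List α) :
    (w.map fun a => fromBlocks (M a) 0 0 (N a)).prod =
      fromBlocks (w.map M).prod 0 0 (w.map N).prod := by
  induction w with
  | nil => simp [fromBlocks_one]
  | cons a w ih => simp [ih, fromBlocks_multiply]

theorem reprSeries_fromBlocks [Fintype σ] [DecidableEq σ] [Fintype τ] [DecidableEq τ]
    (i f : σ → S) (M : α → Matrix σ σ S) (j g : τ → S) (N : α → Matrix τ τ S) :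
    reprSeries (Sum.elim i j) (fun a => fromBlocks (M a) 0 0 (N a)) (Sum.elim f g) =
      reprSeries i M f + reprSeries j N g := by
  funext w
  simp [reprSeries, prod_map_fromBlocks_zero, fromBlocks_mulVec]

theorem one_mem_Rev : (1 : List α → S) ∈ Rev S α := by
  have h := reprSeries_mem_Rev (σ := Unit) (α := α) (S := S) 1 1 (fun _ => 1) fun _ => .one
  convert h
  funext w
  simp [reprSeries]

theorem add_mem_Rev {r s : List α → S} (hr : r ∈ Rev S α) (hs : s ∈ Rev S α) :
    r + s ∈ Rev S α := by
  obtain ⟨A, hA, rfl⟩ := hr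
  obtain ⟨B, hB, rfl⟩ := hs
  rw [A.series_eq_reprSeries, B.series_eq_reprSeries, ← reprSeries_fromBlocks]
  exact reprSeries_mem_Rev _ _ _ fun a => IsPartialMonomial.fromBlocks_zero (hA a) (hB a)

end Semiring

section CommSemiring

variable [CommSemiring S]

theorem prod_map_kronecker [Fintype σ] [DecidableEq σ] [Fintype τ] [DecidableEq τ]
    (M : α → Matrix σ σ S) (N : α → Matrix τ τ S) (w : List α) :
    (w.map fun a => M a ⊗ₖ N a).prod = (w.map M).prod ⊗ₖ (w.map N).prod := by
  induction w with
  | nil => simp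
  | cons a w ih => simp [ih, mul_kronecker_mul]

theorem dotProduct_kronecker_mulVec [Fintype σ] [Fintype τ] (i f : σ → S)
    (P : Matrix σ σ S) (j g : τ → S) (Q : Matrix τ τ S) :
    (fun p : σ × τ => i p.1 * j p.2) ⬝ᵥ (P ⊗ₖ Q) *ᵥ (fun p => f p.1 * g p.2) =
      (i ⬝ᵥ P *ᵥ f) * (j ⬝ᵥ Q *ᵥ g) := by
  have hv : (P ⊗ₖ Q) *ᵥ (fun p => f p.1 * g p.2) = fun p => (P *ᵥ f) p.1 * (Q *ᵥ g) p.2 := by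
    funext p
    simp only [mulVec, dotProduct, Fintype.sum_prod_type, kroneckerMap_apply, Finset.sum_mul_sum]
    exact Finset.sum_congr rfl fun _ _ => Finset.sum_congr rfl fun _ _ => mul_mul_mul_comm ..
  simp only [hv, dotProduct, Fintype.sum_prod_type, Finset.sum_mul_sum, mul_mul_mul_comm]

theorem reprSeries_kronecker [Fintype σ] [DecidableEq σ] [Fintype τ] [DecidableEq τ]
    (i f : σ → S) (M : α → Matrix σ σ S) (j g : τ → S) (N : α → Matrix τ τ S) :
    reprSeries (fun p : σ × τ => i p.1 * j p.2) (fun a => M a ⊗ₖ N a) (fun p => f p.1 * g p.2) =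
      reprSeries i M f * reprSeries j N g := by
  funext w
  simp only [reprSeries, prod_map_kronecker, dotProduct_kronecker_mulVec, Pi.mul_apply]

theorem mul_mem_Rev {r s : List α → S} (hr : r ∈ Rev S α) (hs : s ∈ Rev S α) :
    r * s ∈ Rev S α := by
  obtain ⟨A, hA, rfl⟩ := hr
  obtain ⟨B, hB, rfl⟩ := hs
  rw [A.series_eq_reprSeries, B.series_eq_reprSeries, ← reprSeries_kronecker]
  exact reprSeries_mem_Rev _ _ _ fun a => IsPartialMonomial.kronecker (hA a) (hB a)

end CommSemiring

theorem supp_one [Semiring S] [Nontrivial S] : supp (1 : List α → S) = Set.univ :=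
  Set.eq_univ_of_forall fun _ => one_ne_zero

theorem supp_mul [Semiring S] [NoZeroDivisors S] (r s : List α → S) :
    supp (r * s) = supp r ∩ supp s :=
  Set.ext fun _ => mul_ne_zero_iff

theorem supp_add_charSeries (r : List α → ZMod 2) (L : Set (List α)) :
    supp (r + charSeries (ZMod 2) L) = symmDiff (supp r) L := by
  ext w
  have key : ∀ x : ZMod 2, x + 1 ≠ 0 ↔ x = 0 := by decide
  by_cases hw : w ∈ L <;> simp [supp, charSeries, hw, key, Set.mem_symmDiff]

theorem supp_add_one (r : List α → ZMod 2) : supp (r + 1) = (supp r)ᶜ := by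
  have h := supp_add_charSeries r Set.univ
  rwa [charSeries, Set.indicator_univ, ← Set.top_eq_univ, symmDiff_top, hnot_eq_compl] at h

theorem univ_mem_RevL [Semiring S] [Nontrivial S] : Set.univ ∈ RevL S α :=
  ⟨1, one_mem_Rev, supp_one⟩

theorem inter_mem_RevL [CommSemiring S] [NoZeroDivisors S] {L K : Set (List α)}
    (hL : L ∈ RevL S α) (hK : K ∈ RevL S α) : L ∩ K ∈ RevL S α := by
  obtain ⟨r, hr, rfl⟩ := hL
  obtain ⟨s, hs, rfl⟩ := hK
  exact ⟨r * s, mul_mem_Rev hr hs, supp_mul r s⟩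

theorem compl_mem_RevL {L : Set (List α)} (hL : L ∈ RevL (ZMod 2) α) :
    Lᶜ ∈ RevL (ZMod 2) α := by
  obtain ⟨r, hr, rfl⟩ := hL
  exact ⟨r + 1, add_mem_Rev hr one_mem_Rev, supp_add_one r⟩

theorem empty_mem_RevL : ∅ ∈ RevL (ZMod 2) α := by
  simpa using compl_mem_RevL (univ_mem_RevL (α := α))

theorem union_mem_RevL {L K : Set (List α)} (hL : L ∈ RevL (ZMod 2) α)
    (hK : K ∈ RevL (ZMod 2) α) : L ∪ K ∈ RevL (ZMod 2) α := by
  simpa [Set.compl_inter] using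
    compl_mem_RevL (inter_mem_RevL (compl_mem_RevL hL) (compl_mem_RevL hK))

theorem biUnion_mem_RevL {ι : Type} {s : Set ι} (hs : s.Finite) {L : ι → Set (List α)}
    (hL : ∀ i ∈ s, L i ∈ RevL (ZMod 2) α) : ⋃ i ∈ s, L i ∈ RevL (ZMod 2) α := by
  have h := Finset.sup_induction (p := (· ∈ RevL (ZMod 2) α)) (s := hs.toFinset) (f := L)
    empty_mem_RevL (fun _ h₁ _ h₂ => union_mem_RevL h₁ h₂) (by simpa using hL)
  simpa using h

namespace RevNFA

variable (B : RevNFA α)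

def pathLang (p q : B.Q) : Set (List α) :=
  {w | B.Path p w q}

theorem lang_eq_biUnion_pathLang : B.lang = ⋃ p ∈ B.I, ⋃ q ∈ B.F, B.pathLang p q := by
  ext w
  simp [lang, pathLang]

variable {B}

theorem path_nil_iff {p q : B.Q} : B.Path p [] q ↔ p = q :=
  ⟨fun h => by cases h; rfl, fun h => h ▸ .nil p⟩

theorem path_cons_iff {p q : B.Q} {a : α} {w : List α} :
    B.Path p (a :: w) q ↔ ∃ r, B.δ p a r ∧ B.Path r w q :=
  ⟨fun h => by cases h with | cons hδ hw => exact ⟨_, hδ, hw⟩,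
    fun ⟨_, hδ, hw⟩ => .cons hδ hw⟩

variable (B)

open Classical in
noncomputable def transMatrix (S : Type) [Semiring S] (a : α) : Matrix B.Q B.Q S :=
  of fun p q => if B.δ p a q then 1 else 0

theorem isPartialMonomial_transMatrix [Semiring S] (a : α) :
    IsPartialMonomial (B.transMatrix S a) := by
  have hδ : ∀ {p q}, B.transMatrix S a p q ≠ 0 → B.δ p a q := fun h => by
    by_contra hn
    simp [transMatrix, hn] at h
  exact ⟨fun p q q' h h' => B.det p a q q' (hδ h) (hδ h'),
    fun p p' q h h' => B.codet p p' a q (hδ h) (hδ h')⟩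

open Classical in
theorem prod_map_transMatrix_apply [Semiring S] [Fintype B.Q] [DecidableEq B.Q] (w : List α)
    (p q : B.Q) : (w.map (B.transMatrix S)).prod p q = if B.Path p w q then 1 else 0 := by
  induction w generalizing p with
  | nil => simp [one_apply, path_nil_iff]
  | cons a w ih =>
    simp only [List.map_cons, List.prod_cons, mul_apply, ih, path_cons_iff]
    by_cases hstep : ∃ r, B.δ p a r
    · obtain ⟨r, hr⟩ := hstep
      have hδ : ∀ r', B.δ p a r' ↔ r' = r := fun r' => ⟨fun h => B.det p a r' r h hr, (· ▸ hr)⟩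
      simp only [transMatrix, of_apply, hδ, ite_mul, one_mul, zero_mul, Finset.sum_ite_eq',
        Finset.mem_univ, if_true, exists_eq_left]
    · push Not at hstep
      simp [transMatrix, hstep]

theorem pathLang_mem_RevL [Semiring S] [Nontrivial S] (p q : B.Q) :
    B.pathLang p q ∈ RevL S α := by
  let := B.fintypeQ
  classical
  refine ⟨_, reprSeries_mem_Rev (Pi.single p 1) (Pi.single q 1) (B.transMatrix S)
    B.isPartialMonomial_transMatrix, ?_⟩
  ext w
  simp [supp, reprSeries, pathLang, prod_map_transMatrix_apply]

theorem lang_mem_RevL : B.lang ∈ RevL (ZMod 2) α := by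
  let := B.fintypeQ
  rw [lang_eq_biUnion_pathLang]
  exact biUnion_mem_RevL (Set.toFinite _) fun p _ =>
    biUnion_mem_RevL (Set.toFinite _) fun q _ => B.pathLang_mem_RevL p q

end RevNFA

namespace BoolClosure

variable {C : Set (Set (List α))} {L K : Set (List α)}

theorem diff (hL : BoolClosure C L) (hK : BoolClosure C K) : BoolClosure C (L \ K) :=
  Set.sdiff_eq (s := L) (t := K) ▸ hL.inter hK.compl

theorem symmDiff (hL : BoolClosure C L) (hK : BoolClosure C K) :
    BoolClosure C (symmDiff L K) :=
  (hL.diff hK).union (hK.diff hL)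

theorem supp_sum_smul_charSeries {ι : Type} (s : Finset ι) (c : ι → ZMod 2)
    {L : ι → Set (List α)} (hL : ∀ i ∈ s, BoolClosure C (L i)) :
    BoolClosure C (supp (∑ i ∈ s, c i • charSeries (ZMod 2) (L i))) := by
  classical
  induction s using Finset.induction_on with
  | empty => simpa [supp] using BoolClosure.empty
  | insert i s hi ih =>
    rw [Finset.sum_insert hi, add_comm]
    have hs := ih fun j hj => hL j (Finset.mem_insert_of_mem hj)
    have hci : c i = 0 ∨ c i = 1 := by generalize c i = x; revert x; decide
    rcases hci with h0 | h1
    · simpa [h0] using hs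
    · rw [h1, one_smul, supp_add_charSeries]
      exact hs.symmDiff (hL i (Finset.mem_insert_self i s))

end BoolClosure

namespace WA

-- An `abbrev`, so that instances on `Fin A.n` are found for its state type.
abbrev toRevNFA [Semiring S] (A : WA S α) (hA : A.Reversible) (I F : Set (Fin A.n)) :
    RevNFA α where
  Q := Fin A.n
  fintypeQ := inferInstance
  δ p a q := A.trans a p q ≠ 0
  I := I
  F := F
  det p a _ _ := (hA a).1 p _ _
  codet _ _ a q := (hA a).2 _ _ q

variable (A : WA (ZMod 2) α)

theorem transMatrix_toRevNFA (hA : A.Reversible) (I F : Set (Fin A.n)) :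
    (A.toRevNFA hA I F).transMatrix (ZMod 2) = A.trans := by
  funext a
  ext p q
  have key : ∀ x : ZMod 2, (if x ≠ 0 then 1 else 0) = x := by decide
  simp only [RevNFA.transMatrix, of_apply]
  convert key (A.trans a p q)

theorem matWord_apply (hA : A.Reversible) (w : List α) (p q : Fin A.n) :
    A.matWord w p q = charSeries (ZMod 2) (A.toRevNFA hA {p} {q}).lang w := by
  rw [matWord, ← A.transMatrix_toRevNFA hA {p} {q}, RevNFA.prod_map_transMatrix_apply]
  by_cases hw : (A.toRevNFA hA {p} {q}).Path p w q <;> simp [charSeries, RevNFA.lang, hw]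

theorem series_eq_sum_smul_charSeries (hA : A.Reversible) :
    A.series = ∑ pq : Fin A.n × Fin A.n,
      (A.init pq.1 * A.final pq.2) • charSeries (ZMod 2) (A.toRevNFA hA {pq.1} {pq.2}).lang := by
  funext w
  simp only [series, dotProduct, mulVec, matWord_apply A hA, Finset.sum_apply, Pi.smul_apply,
    Fintype.sum_prod_type, Finset.mul_sum, smul_eq_mul]
  exact Finset.sum_congr rfl fun _ _ => Finset.sum_congr rfl fun _ _ => by ring

theorem supp_series_mem_boolClosure (hA : A.Reversible) :
    BoolClosure (RevLB α) (supp A.series) := by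
  rw [A.series_eq_sum_smul_charSeries hA]
  exact BoolClosure.supp_sum_smul_charSeries _ _ fun _ _ => .base ⟨_, rfl⟩

end WA

end RevWA

open RevWA in
theorem stmt10_general (α : Type) :
    RevL (ZMod 2) α = {L : Set (List α) | BoolClosure (RevLB α) L} := by
  ext L
  constructor
  · rintro ⟨_, ⟨A, hA, rfl⟩, rfl⟩
    exact A.supp_series_mem_boolClosure hA
  · intro hL
    induction hL with
    | base hL => obtain ⟨B, rfl⟩ := hL; exact B.lang_mem_RevL
    | empty => exact empty_mem_RevL
    | univ => exact univ_mem_RevL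
    | union _ _ hL hK => exact union_mem_RevL hL hK
    | inter _ _ hL hK => exact inter_mem_RevL hL hK
    | compl _ hL => exact compl_mem_RevL hL

open RevWA in
theorem stmt10 (α : Type) [Fintype α] [Nonempty α] :
    RevL (ZMod 2) α = {L : Set (List α) | BoolClosure (RevLB α) L} :=
  stmt10_general α
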